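/- Let ω(x,θ) = (α x²/(e^{√α} − 1)²)·(2 − 2cos θ) on D = [1, e^{√α}] × [0, π] with α > 0. As α → 0⁺, the distribution function φ_α(t) = μ₂({(x,θ) ∈ D : ω(x,θ) ≤ t})/(π(e^{√α} − 1)) converges pointwise for t ∈ [0, 4] to (2/π)·arcsin(√t/2). -/

import Mathlib

open Real Set MeasureTheory Filter

/-- Distribution function of the Euler–Cauchy FD symbol
`ω(x,θ) = (αx²/(e^{√α}−1)²)(2−2cosθ)` on `[1,e^{√α}]×[0,π]`. -/
noncomputable def eulerCauchyPhi (α t : ℝ) : ℝ :=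
  (volume {p : ℝ × ℝ |
      p ∈ Set.Icc (1 : ℝ) (Real.exp (Real.sqrt α)) ×ˢ Set.Icc (0 : ℝ) Real.pi ∧
      α * p.1 ^ 2 / (Real.exp (Real.sqrt α) - 1) ^ 2 * (2 - 2 * Real.cos p.2) ≤ t}).toReal /
    (Real.pi * (Real.exp (Real.sqrt α) - 1))

/-- Measure of a cosine superlevel set in `[0,π]`. -/
lemma volume_cos_superlevel (a : ℝ) :
    volume {θ : ℝ | θ ∈ Set.Icc (0:ℝ) Real.pi ∧ a ≤ Real.cos θ} =
      ENNReal.ofReal (Real.arccos a) := by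
  by_cases h1 : 1 < a
  · have hempty : {θ : ℝ | θ ∈ Set.Icc (0:ℝ) Real.pi ∧ a ≤ Real.cos θ} = ∅ := by
      ext θ
      simp only [Set.mem_setOf_eq, Set.mem_empty_iff_false, iff_false, not_and]
      intro _ hc
      exact absurd (hc.trans (Real.cos_le_one θ)) (not_le.2 h1)
    rw [hempty, Real.arccos_of_one_le h1.le]
    simp
  · push_neg at h1
    have hset : {θ : ℝ | θ ∈ Set.Icc (0:ℝ) Real.pi ∧ a ≤ Real.cos θ} =
        Set.Icc 0 (Real.arccos a) := by
      ext θ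
      constructor
      · rintro ⟨hθ, hc⟩
        refine ⟨hθ.1, ?_⟩
        have h2 : Real.arccos (Real.cos θ) ≤ Real.arccos a := by
          unfold Real.arccos
          have := Real.monotone_arcsin hc
          linarith
        rwa [Real.arccos_cos hθ.1 hθ.2] at h2
      · rintro ⟨h0, h2⟩
        have hπ : θ ≤ Real.pi := h2.trans (Real.arccos_le_pi a)
        refine ⟨⟨h0, hπ⟩, ?_⟩
        have hc : Real.cos (Real.arccos a) ≤ Real.cos θ :=
          Real.cos_le_cos_of_nonneg_of_le_pi h0 (Real.arccos_le_pi a) h2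
        by_cases hm1 : -1 ≤ a
        · rwa [Real.cos_arccos hm1 h1] at hc
        · push_neg at hm1
          have : Real.cos (Real.arccos a) = -1 := by
            rw [Real.arccos_of_le_neg_one hm1.le, Real.cos_pi]
          linarith
    rw [hset, Real.volume_Icc]
    simp

/-- The arccos/arcsin identity for the limiting distribution. -/
lemma arccos_eq_two_arcsin {t : ℝ} (ht : t ∈ Set.Icc (0:ℝ) 4) :
    Real.arccos (1 - t / 2) = 2 * Real.arcsin (Real.sqrt t / 2) := by
  obtain ⟨ht0, ht4⟩ := ht
  have hs : Real.sqrt t ≤ 2 := by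
    rw [show (2:ℝ) = Real.sqrt 4 by rw [show (4:ℝ) = 2^2 by norm_num, Real.sqrt_sq]; norm_num]
    exact Real.sqrt_le_sqrt ht4
  have hx0 : (0:ℝ) ≤ Real.sqrt t / 2 := by positivity
  have hx1 : Real.sqrt t / 2 ≤ 1 := by linarith
  set u := Real.arcsin (Real.sqrt t / 2) with hu
  have hsin : Real.sin u = Real.sqrt t / 2 := Real.sin_arcsin (by linarith) hx1
  have hu0 : 0 ≤ u := Real.arcsin_nonneg.2 hx0
  have huπ : u ≤ Real.pi / 2 := Real.arcsin_le_pi_div_two _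
  have hcos : Real.cos (2 * u) = 1 - t / 2 := by
    have hsq : Real.sin u ^ 2 = t / 4 := by
      rw [hsin, div_pow, Real.sq_sqrt ht0]; norm_num
    have := Real.cos_two_mul u
    have hpy := Real.sin_sq_add_cos_sq u
    nlinarith
  rw [← hcos, Real.arccos_cos (by linarith) (by linarith)]

/-- Two-sided bound on `eulerCauchyPhi` for positive `α`. -/
lemma eulerCauchyPhi_bounds (t : ℝ) {α : ℝ} (hα : 0 < α) :
    Real.arccos (1 - t / (2 * (Real.sqrt α * Real.exp (Real.sqrt α) /
        (Real.exp (Real.sqrt α) - 1)) ^ 2)) / Real.pi ≤ eulerCauchyPhi α t ∧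
    eulerCauchyPhi α t ≤ Real.arccos (1 - t / (2 * (Real.sqrt α /
        (Real.exp (Real.sqrt α) - 1)) ^ 2)) / Real.pi := by
  set E := Real.exp (Real.sqrt α) with hEdef
  have hs0 : 0 < Real.sqrt α := Real.sqrt_pos.2 hα
  have hE1 : 1 < E := by
    rw [hEdef, show (1:ℝ) = Real.exp 0 by simp]
    exact Real.exp_lt_exp.2 hs0
  have hd : 0 < E - 1 := by linarith
  set m := Real.sqrt α / (E - 1) with hm
  set M := Real.sqrt α * E / (E - 1) with hM
  have hm0 : 0 < m := div_pos hs0 hd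
  have hM0 : 0 < M := div_pos (by positivity) hd
  set S := {p : ℝ × ℝ |
      p ∈ Set.Icc (1 : ℝ) E ×ˢ Set.Icc (0 : ℝ) Real.pi ∧
      α * p.1 ^ 2 / (E - 1) ^ 2 * (2 - 2 * Real.cos p.2) ≤ t} with hS
  -- rewrite the symbol as a square
  have hsq : ∀ x : ℝ, α * x ^ 2 / (E - 1) ^ 2 = (Real.sqrt α * x / (E - 1)) ^ 2 := by
    intro x
    rw [div_pow, mul_pow, Real.sq_sqrt hα.le]
  -- helper: b*(2-2cos θ) ≤ t ↔ 1 - t/(2b) ≤ cos θ for b > 0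
  have hiff : ∀ b c : ℝ, 0 < b → (b * (2 - 2 * c) ≤ t ↔ 1 - t / (2 * b) ≤ c) := by
    intro b c hb
    rw [sub_le_comm, le_div_iff₀ (by linarith)]
    constructor <;> intro h <;> nlinarith
  -- inclusions
  have hsub1 : (Set.Icc (1 : ℝ) E ×ˢ {θ : ℝ | θ ∈ Set.Icc (0:ℝ) Real.pi ∧
      1 - t / (2 * M ^ 2) ≤ Real.cos θ}) ⊆ S := by
    rintro ⟨x, θ⟩ ⟨hx, hθ, hc⟩
    have hx1 : (1:ℝ) ≤ x := hx.1
    have hq : Real.sqrt α * x / (E - 1) ≤ M := by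
      rw [hM]
      gcongr
      exact hx.2
    have hq0 : 0 ≤ Real.sqrt α * x / (E - 1) := by
      apply div_nonneg _ hd.le
      nlinarith
    refine ⟨⟨hx, hθ⟩, ?_⟩
    rw [hsq]
    have hM2 : M ^ 2 * (2 - 2 * Real.cos θ) ≤ t := (hiff (M^2) _ (by positivity)).2 hc
    have hmono : (Real.sqrt α * x / (E - 1)) ^ 2 * (2 - 2 * Real.cos θ) ≤
        M ^ 2 * (2 - 2 * Real.cos θ) := by
      apply mul_le_mul_of_nonneg_right _ _
      · exact pow_le_pow_left₀ hq0 hq 2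
      · have := Real.cos_le_one θ; linarith
    linarith
  have hsub2 : S ⊆ Set.Icc (1 : ℝ) E ×ˢ {θ : ℝ | θ ∈ Set.Icc (0:ℝ) Real.pi ∧
      1 - t / (2 * m ^ 2) ≤ Real.cos θ} := by
    rintro ⟨x, θ⟩ ⟨⟨hx, hθ⟩, hle⟩
    rw [hsq] at hle
    have hq : m ≤ Real.sqrt α * x / (E - 1) := by
      rw [hm]
      have hx1 : (1:ℝ) ≤ x := hx.1
      gcongr
      nlinarith
    have hm2 : m ^ 2 * (2 - 2 * Real.cos θ) ≤ t := by
      have hmono : m ^ 2 * (2 - 2 * Real.cos θ) ≤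
          (Real.sqrt α * x / (E - 1)) ^ 2 * (2 - 2 * Real.cos θ) := by
        apply mul_le_mul_of_nonneg_right
        · exact pow_le_pow_left₀ hm0.le hq 2
        · have := Real.cos_le_one θ; linarith
      linarith
    exact ⟨hx, hθ, (hiff (m^2) _ (by positivity)).1 hm2⟩
  -- volumes of product bounds
  have hvol : ∀ a : ℝ, volume (Set.Icc (1 : ℝ) E ×ˢ {θ : ℝ | θ ∈ Set.Icc (0:ℝ) Real.pi ∧
      a ≤ Real.cos θ}) = ENNReal.ofReal ((E - 1) * Real.arccos a) := by
    intro a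
    rw [MeasureTheory.Measure.volume_eq_prod, MeasureTheory.Measure.prod_prod,
      Real.volume_Icc, volume_cos_superlevel,
      ← ENNReal.ofReal_mul (by linarith)]
  have hub : volume S ≤ ENNReal.ofReal ((E - 1) * Real.arccos (1 - t / (2 * m ^ 2))) := by
    rw [← hvol]; exact measure_mono hsub2
  have hlb : ENNReal.ofReal ((E - 1) * Real.arccos (1 - t / (2 * M ^ 2))) ≤ volume S := by
    rw [← hvol]; exact measure_mono hsub1
  have hfin : volume S ≠ ⊤ := (hub.trans_lt ENNReal.ofReal_lt_top).ne
  have hubR : (volume S).toReal ≤ (E - 1) * Real.arccos (1 - t / (2 * m ^ 2)) := by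
    have := ENNReal.toReal_mono ENNReal.ofReal_ne_top hub
    rwa [ENNReal.toReal_ofReal (mul_nonneg hd.le (Real.arccos_nonneg _))] at this
  have hlbR : (E - 1) * Real.arccos (1 - t / (2 * M ^ 2)) ≤ (volume S).toReal := by
    have := ENNReal.toReal_mono hfin hlb
    rwa [ENNReal.toReal_ofReal (mul_nonneg hd.le (Real.arccos_nonneg _))] at this
  have hπd : 0 < Real.pi * (E - 1) := by positivity
  have hphi : eulerCauchyPhi α t = (volume S).toReal / (Real.pi * (E - 1)) := rfl
  constructor
  · rw [hphi]
    calc Real.arccos (1 - t / (2 * M ^ 2)) / Real.pi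
        = (E - 1) * Real.arccos (1 - t / (2 * M ^ 2)) / (Real.pi * (E - 1)) := by
          field_simp
      _ ≤ (volume S).toReal / (Real.pi * (E - 1)) := by gcongr
  · rw [hphi]
    calc (volume S).toReal / (Real.pi * (E - 1))
        ≤ (E - 1) * Real.arccos (1 - t / (2 * m ^ 2)) / (Real.pi * (E - 1)) := by gcongr
      _ = Real.arccos (1 - t / (2 * m ^ 2)) / Real.pi := by field_simp

lemma tendsto_m_aux : Filter.Tendsto
    (fun α : ℝ => Real.sqrt α / (Real.exp (Real.sqrt α) - 1))
    (nhdsWithin 0 (Set.Ioi 0)) (nhds 1) := by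
  have hslope : Filter.Tendsto (fun y : ℝ => (Real.exp y - 1) / y)
      (nhdsWithin 0 {0}ᶜ) (nhds 1) := by
    have h := Real.hasDerivAt_exp 0
    rw [hasDerivAt_iff_tendsto_slope] at h
    simp only [Real.exp_zero] at h
    have : (fun y : ℝ => (Real.exp y - 1) / y) = slope Real.exp 0 := by
      funext y; simp [slope_def_field]
    rw [this]; exact h
  have hinv : Filter.Tendsto (fun y : ℝ => y / (Real.exp y - 1))
      (nhdsWithin 0 {0}ᶜ) (nhds 1) := by
    have := hslope.inv₀ one_ne_zero
    simp only [inv_one] at this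
    convert this using 2 with y
    rw [inv_div]
  have hsqrt : Filter.Tendsto Real.sqrt (nhdsWithin 0 (Set.Ioi 0))
      (nhdsWithin 0 {0}ᶜ) := by
    apply tendsto_nhdsWithin_of_tendsto_nhds_of_eventually_within
    · have : Filter.Tendsto Real.sqrt (nhds 0) (nhds 0) := by
        have := Real.continuous_sqrt.tendsto 0
        simpa using this
      exact this.mono_left nhdsWithin_le_nhds
    · filter_upwards [self_mem_nhdsWithin] with x hx
      exact (Real.sqrt_pos.2 hx).ne'
  exact hinv.comp hsqrt

/-- For every `t ∈ [0,4]`, `φ_α(t) → (2/π) arcsin(√t/2)` as `α → 0⁺`. -/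
theorem eulerCauchyPhi_tendsto (t : ℝ) (ht : t ∈ Set.Icc (0 : ℝ) 4) :
    Filter.Tendsto (fun α : ℝ => eulerCauchyPhi α t)
      (nhdsWithin 0 (Set.Ioi 0))
      (nhds (2 / Real.pi * Real.arcsin (Real.sqrt t / 2))) := by
  have hm := tendsto_m_aux
  have hE : Filter.Tendsto (fun α : ℝ => Real.exp (Real.sqrt α))
      (nhdsWithin 0 (Set.Ioi 0)) (nhds 1) := by
    have : Filter.Tendsto (fun α : ℝ => Real.exp (Real.sqrt α)) (nhds 0) (nhds 1) := by
      have := (Real.continuous_exp.comp Real.continuous_sqrt).tendsto 0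
      simpa [Function.comp_def] using this
    exact this.mono_left nhdsWithin_le_nhds
  have hM : Filter.Tendsto
      (fun α : ℝ => Real.sqrt α * Real.exp (Real.sqrt α) / (Real.exp (Real.sqrt α) - 1))
      (nhdsWithin 0 (Set.Ioi 0)) (nhds 1) := by
    have := hm.mul hE
    simp only [one_mul] at this
    convert this using 2 with α
    ring
  -- limit of the bound functions
  have hbound : ∀ b : ℝ → ℝ, Filter.Tendsto b (nhdsWithin 0 (Set.Ioi 0)) (nhds 1) →
      Filter.Tendsto (fun α => Real.arccos (1 - t / (2 * (b α) ^ 2)) / Real.pi)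
        (nhdsWithin 0 (Set.Ioi 0)) (nhds (Real.arccos (1 - t / 2) / Real.pi)) := by
    intro b hb
    have hinner : Filter.Tendsto (fun α => 1 - t / (2 * (b α) ^ 2))
        (nhdsWithin 0 (Set.Ioi 0)) (nhds (1 - t / 2)) := by
      have h2 : Filter.Tendsto (fun α => 2 * (b α) ^ 2)
          (nhdsWithin 0 (Set.Ioi 0)) (nhds 2) := by
        have := (hb.mul hb).const_mul (2:ℝ)
        simp only [mul_one] at this
        convert this using 2 with α
        ring
      have := (tendsto_const_nhds (x := t)).div h2 (by norm_num)
      exact (tendsto_const_nhds (x := (1:ℝ))).sub this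
    exact ((Real.continuous_arccos.tendsto _).comp hinner).div_const _
  have hlimit : Real.arccos (1 - t / 2) / Real.pi =
      2 / Real.pi * Real.arcsin (Real.sqrt t / 2) := by
    rw [arccos_eq_two_arcsin ht]
    ring
  rw [← hlimit]
  apply tendsto_of_tendsto_of_tendsto_of_le_of_le'
    (hbound _ hM) (hbound _ hm)
  · filter_upwards [self_mem_nhdsWithin] with α hα
    exact (eulerCauchyPhi_bounds t hα).1
  · filter_upwards [self_mem_nhdsWithin] with α hα
    exact (eulerCauchyPhi_bounds t hα).2
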